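/- The function α ↦ 4^α B(1+α, 1+α) is strictly increasing on [0, ∞) and tends to +∞ as α → ∞. -/

import Mathlib

/-!
By Euler's integral, `4 ^ α * B(1 + α, 1 + α) = ∫₀¹ (4 t (1 - t)) ^ α dt`. The base
`4 t (1 - t)` lies in `[0, 1]` and equals `1` only at `t = 1 / 2`, so the integral is positive,
strictly decreasing in `α`, and tends to `0` by dominated convergence; its reciprocal therefore
increases strictly to `+∞`.
-/

open Filter

/-- Euler Beta function in terms of the Gamma function. -/
noncomputable def Beta (a b : ℝ) : ℝ := Real.Gamma a * Real.Gamma b / Real.Gamma (a + b)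

open Real Set Topology Interval MeasureTheory intervalIntegral

theorem Beta_eq_integral {a b : ℝ} (ha : 0 < a) (hb : 0 < b) :
    Beta a b = ∫ t in (0 : ℝ)..1, t ^ (a - 1) * (1 - t) ^ (b - 1) := by
  have hGamma := Complex.Gamma_mul_Gamma_eq_betaIntegral (s := a) (t := b)
    (by simpa using ha) (by simpa using hb)
  have hbeta : Complex.betaIntegral a b
      = ((∫ t in (0 : ℝ)..1, t ^ (a - 1) * (1 - t) ^ (b - 1) : ℝ) : ℂ) := by
    rw [Complex.betaIntegral, ← intervalIntegral.integral_ofReal]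
    refine integral_congr fun t ht => ?_
    rw [uIcc_of_le zero_le_one] at ht
    simp only [Complex.ofReal_mul, Complex.ofReal_cpow ht.1,
      Complex.ofReal_cpow (sub_nonneg.2 ht.2), Complex.ofReal_sub, Complex.ofReal_one]
  rw [hbeta, ← Complex.ofReal_add, Complex.Gamma_ofReal, Complex.Gamma_ofReal,
    Complex.Gamma_ofReal] at hGamma
  rw [Beta, div_eq_iff (Gamma_pos_of_pos (add_pos ha hb)).ne', mul_comm _ (Gamma (a + b))]
  exact_mod_cast hGamma

noncomputable def centralBetaIntegral (α : ℝ) : ℝ :=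
  ∫ t in (0 : ℝ)..1, (4 * t * (1 - t)) ^ α

theorem four_rpow_mul_Beta_eq_centralBetaIntegral {α : ℝ} (hα : -1 < α) :
    (4 : ℝ) ^ α * Beta (1 + α) (1 + α) = centralBetaIntegral α := by
  rw [Beta_eq_integral (by linarith) (by linarith), add_sub_cancel_left,
    ← intervalIntegral.integral_const_mul]
  refine integral_congr fun t ht => ?_
  rw [uIcc_of_le zero_le_one] at ht
  rw [mul_rpow (by linarith [ht.1]) (sub_nonneg.2 ht.2), mul_rpow (by norm_num) ht.1, mul_assoc]

theorem centralBetaIntegral_pos {α : ℝ} (hα : -1 < α) : 0 < centralBetaIntegral α := by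
  have hΓ : 0 < Gamma (1 + α) := Gamma_pos_of_pos (by linarith)
  rw [← four_rpow_mul_Beta_eq_centralBetaIntegral hα, Beta]
  exact mul_pos (by positivity) (div_pos (mul_pos hΓ hΓ) (Gamma_pos_of_pos (by linarith)))

section Kernel

variable {t : ℝ}

theorem four_mul_mul_one_sub_nonneg (ht : t ∈ Icc (0 : ℝ) 1) : 0 ≤ 4 * t * (1 - t) :=
  mul_nonneg (by linarith [ht.1]) (sub_nonneg.2 ht.2)

theorem four_mul_mul_one_sub_le_one : 4 * t * (1 - t) ≤ 1 := by
  nlinarith [sq_nonneg (2 * t - 1)]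

theorem four_mul_mul_one_sub_lt_one (ht : t ≠ 1 / 2) : 4 * t * (1 - t) < 1 := by
  nlinarith [sq_pos_of_ne_zero (sub_ne_zero.2 ht)]

theorem continuous_four_mul_mul_one_sub_rpow {α : ℝ} (hα : 0 ≤ α) :
    Continuous fun t : ℝ => (4 * t * (1 - t)) ^ α :=
  (by fun_prop : Continuous fun t : ℝ => 4 * t * (1 - t)).rpow_const fun _ => Or.inr hα

end Kernel

theorem strictAntiOn_centralBetaIntegral : StrictAntiOn centralBetaIntegral (Ici 0) := by
  intro a ha b hb hab
  have hle : ∀ t ∈ Ioc (0 : ℝ) 1, (4 * t * (1 - t)) ^ b ≤ (4 * t * (1 - t)) ^ a :=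
    fun t ht => rpow_le_rpow_of_exponent_ge' (four_mul_mul_one_sub_nonneg (Ioc_subset_Icc_self ht))
      four_mul_mul_one_sub_le_one ha hab.le
  have hlt : (4 * (1 / 4) * (1 - 1 / 4) : ℝ) ^ b < (4 * (1 / 4) * (1 - 1 / 4) : ℝ) ^ a :=
    rpow_lt_rpow_of_exponent_gt (by norm_num) (four_mul_mul_one_sub_lt_one (by norm_num)) hab
  exact integral_lt_integral_of_continuousOn_of_le_of_exists_lt zero_lt_one
    (continuous_four_mul_mul_one_sub_rpow hb).continuousOn
    (continuous_four_mul_mul_one_sub_rpow ha).continuousOn hle ⟨1 / 4, by norm_num, hlt⟩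

theorem tendsto_centralBetaIntegral_atTop : Tendsto centralBetaIntegral atTop (𝓝 0) := by
  have hbound : ∀ α : ℝ, 0 ≤ α → ∀ t ∈ Ι (0 : ℝ) 1, ‖(4 * t * (1 - t)) ^ α‖ ≤ 1 :=
      fun α hα t ht => by
    rw [uIoc_of_le zero_le_one] at ht
    have hq := four_mul_mul_one_sub_nonneg (Ioc_subset_Icc_self ht)
    rw [norm_of_nonneg (rpow_nonneg hq α)]
    exact rpow_le_one hq four_mul_mul_one_sub_le_one hα
  have hpointwise : ∀ t ∈ Ι (0 : ℝ) 1, t ≠ 1 / 2 →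
      Tendsto (fun α : ℝ => (4 * t * (1 - t)) ^ α) atTop (𝓝 0) := fun t ht ht_ne => by
    rw [uIoc_of_le zero_le_one] at ht
    exact tendsto_rpow_atTop_of_base_lt_one _
      (by linarith [four_mul_mul_one_sub_nonneg (Ioc_subset_Icc_self ht)])
      (four_mul_mul_one_sub_lt_one ht_ne)
  have hdominated := tendsto_integral_filter_of_dominated_convergence (f := fun _ => (0 : ℝ))
    (fun _ => 1)
    ((eventually_ge_atTop 0).mono fun α hα =>
      (continuous_four_mul_mul_one_sub_rpow hα).aestronglyMeasurable)
    ((eventually_ge_atTop 0).mono fun α hα => ae_of_all _ (hbound α hα))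
    intervalIntegrable_const
    ((Measure.ae_ne volume (1 / 2)).mono fun t ht_ne ht =>
      hpointwise t ht ht_ne)
  rwa [intervalIntegral.integral_zero] at hdominated

theorem stmt15 :
    StrictMonoOn (fun α : ℝ => 1 / ((4:ℝ) ^ α * Beta (1 + α) (1 + α))) (Set.Ici 0) ∧
    Tendsto (fun α : ℝ => 1 / ((4:ℝ) ^ α * Beta (1 + α) (1 + α))) atTop atTop := by
  have hrecip : ∀ α ∈ Ici (0 : ℝ), 1 / ((4 : ℝ) ^ α * Beta (1 + α) (1 + α))
      = (centralBetaIntegral α)⁻¹ := fun α hα => by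
    rw [four_rpow_mul_Beta_eq_centralBetaIntegral (by linarith [mem_Ici.1 hα]), one_div]
  constructor
  · intro a ha b hb hab
    dsimp only
    rw [hrecip a ha, hrecip b hb]
    exact inv_strictAnti₀ (centralBetaIntegral_pos (by linarith [mem_Ici.1 hb]))
      (strictAntiOn_centralBetaIntegral ha hb hab)
  · have hpos : Tendsto centralBetaIntegral atTop (𝓝[>] 0) :=
      tendsto_nhdsWithin_iff.2 ⟨tendsto_centralBetaIntegral_atTop,
        (eventually_ge_atTop 0).mono fun α hα => centralBetaIntegral_pos (by linarith)⟩
    exact (tendsto_inv_nhdsGT_zero.comp hpos).congr'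
      ((eventually_ge_atTop 0).mono fun α hα => (hrecip α hα).symm)
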